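/- For λ > 0, let M^λ_j = exp(λ·j²/4) and let G_λ(z) = exp(−(Log z)²/λ), where Log is the principal branch of the logarithm on ℂ \ (−∞,0]. Then there exists γ_0 > 0 such that for every γ with 0 < γ ≤ γ_0 and every r with 0 < r ≤ 1: G_λ ∈ A_{M^λ}(S_{γ,r}), G_λ is flat on S_{γ,r}, and for every μ with 0 < μ < λ, G_λ ∉ A_{M^μ}(S_{γ,r}). In particular, taking h = G_{2λ}, which satisfies h(z)² = G_λ(z), shows that the conclusion of the ultraholomorphic smooth-roots theorem fails for the (non–moderate-growth) sequences M^λ. -/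

import Mathlib

open Set Filter Topology Complex ENNReal

noncomputable section

/-- The sector `S_{γ,r}` of the complex plane: `0 < |z| < r`, `|arg z| < γπ/2`. -/
def Sector (γ : ℝ) (r : ℝ≥0∞) : Set ℂ :=
  {z : ℂ | z ≠ 0 ∧ |Complex.arg z| < γ * Real.pi / 2 ∧ (‖z‖₊ : ℝ≥0∞) < r}

/-- `f ∈ A^∞(S_{γ,r})`: `f` is holomorphic on the sector and all its derivatives
are bounded there. -/
def AInfty (γ : ℝ) (r : ℝ≥0∞) (f : ℂ → ℂ) : Prop :=
  DifferentiableOn ℂ f (Sector γ r) ∧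
  ∀ j : ℕ, ∃ B : ℝ, ∀ z ∈ Sector γ r, ‖iteratedDeriv j f z‖ ≤ B

/-- `f ∈ A_M(S_{γ,r})`: `f ∈ A^∞(S_{γ,r})` with Denjoy–Carleman bounds. -/
def AClass (M : ℕ → ℝ) (γ : ℝ) (r : ℝ≥0∞) (f : ℂ → ℂ) : Prop :=
  AInfty γ r f ∧
  ∃ C > (0:ℝ), ∃ σ > (0:ℝ), ∀ (j : ℕ), ∀ z ∈ Sector γ r,
    ‖iteratedDeriv j f z‖ ≤ C * σ ^ j * (Nat.factorial j : ℝ) * M j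

/-- `f` is flat on `S_{γ,r}`: every derivative tends to `0` at the vertex. -/
def FlatOn (γ : ℝ) (r : ℝ≥0∞) (f : ℂ → ℂ) : Prop :=
  ∀ j : ℕ, Tendsto (iteratedDeriv j f) (𝓝[Sector γ r] 0) (𝓝 0)

/-- The function `h_M` associated with the sequence `M`. -/
def hFun (M : ℕ → ℝ) (t : ℝ) : ℝ := if t = 0 then 0 else ⨅ j : ℕ, t ^ j * M j

/-- The sequence `M^λ_j = exp(λ j²/4)`. -/
def Mlam (lam : ℝ) : ℕ → ℝ := fun j => Real.exp (lam * (j:ℝ) ^ 2 / 4)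

/-- The function `G_λ(z) = exp(−(Log z)²/λ)`, with the principal logarithm. -/
def Gfun (lam : ℝ) : ℂ → ℂ := fun z => Complex.exp (-(Complex.log z) ^ 2 / lam)

/-! Completing the square in `j log x + λ j²/4 + (log x)²/λ` gives
`exp (-(log x)²/λ) ≤ x^j M^λ_j` for all `x > 0`, with near-equality at `x = exp (-λ j/2)`.
On `Re w > 0` we have `|arg w| < π/2`, hence `|G_λ(w)| ≤ exp (π²/4λ) |w|^n M^λ_n`. When
`|arg z| < π/3` the disc of radius `|z|/2` about `z` stays in `Re w > 0`, and Cauchy's estimate on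
it gives `|G_λ^(j)(z)| ≲ j! 3^j M^λ_j` (taking `n = j`) and `|G_λ^(j)(z)| ≲ |z|` (taking
`n = j + 1`). Conversely, integrating `j` times from the vertex shows that a flat `f ∈ A_M`
satisfies `|f(x)| ≤ C σ^j M_j x^j` on the positive axis; for `G_λ` and `M = M^μ`, `μ < λ`, this
fails at `x = exp (-λ j/2)` once `j` is large. -/

section RealSegment

variable {E : Type*} [NormedAddCommGroup E] [NormedSpace ℝ E]

theorem norm_le_of_tendsto_zero_of_norm_deriv_le {f f' : ℝ → E} {r D : ℝ} {k : ℕ}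
    (hf : ∀ x ∈ Ioo 0 r, HasDerivAt f (f' x) x) (h0 : Tendsto f (𝓝[>] 0) (𝓝 0))
    (hf' : ∀ x ∈ Ioo 0 r, ‖f' x‖ ≤ D * x ^ k) {x : ℝ} (hx : x ∈ Ioo 0 r) :
    ‖f x‖ ≤ D * x ^ (k + 1) / (k + 1) := by
  set B : ℝ → ℝ → ℝ := fun ε y => ‖f ε‖ + D * (y ^ (k + 1) - ε ^ (k + 1)) / (k + 1)
  have hB : ∀ ε y, HasDerivAt (B ε) (D * y ^ k) y := fun ε y => by
    refine ((((hasDerivAt_pow (k + 1) y).sub_const (ε ^ (k + 1))).const_mul D).div_const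
      ((k : ℝ) + 1)).const_add ‖f ε‖ |>.congr_deriv ?_
    push_cast
    field_simp
  have hle : ∀ ε ∈ Ioo 0 x, ‖f x‖ ≤ B ε x := fun ε hε => by
    have hsub : Icc ε x ⊆ Ioo 0 r := fun y hy => ⟨hε.1.trans_le hy.1, hy.2.trans_lt hx.2⟩
    refine image_norm_le_of_norm_deriv_right_le_deriv_boundary
      (fun y hy => (hf y (hsub hy)).continuousAt.continuousWithinAt)
      (fun y hy => (hf y (hsub (Ico_subset_Icc_self hy))).hasDerivWithinAt) (by simp [B])
      (hB ε) (fun y hy => hf' y (hsub (Ico_subset_Icc_self hy))) ⟨hε.2.le, le_rfl⟩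
  have hlim : Tendsto (fun ε => B ε x) (𝓝[>] 0) (𝓝 (D * x ^ (k + 1) / (k + 1))) := by
    have hpow : Tendsto (fun ε : ℝ => ε ^ (k + 1)) (𝓝[>] 0) (𝓝 0) := by
      simpa using ((continuous_pow (k + 1)).tendsto (0 : ℝ)).mono_left nhdsWithin_le_nhds
    simpa [B] using h0.norm.add (((tendsto_const_nhds.sub hpow).const_mul D).div_const _)
  exact ge_of_tendsto hlim (eventually_of_mem (Ioo_mem_nhdsGT hx.1) hle)

open Nat in
theorem norm_le_pow_div_factorial_of_tendsto_zero {g : ℕ → ℝ → E} {r : ℝ}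
    (hg : ∀ m, ∀ x ∈ Ioo 0 r, HasDerivAt (g m) (g (m + 1) x) x)
    (h0 : ∀ m, Tendsto (g m) (𝓝[>] 0) (𝓝 0)) {A : ℝ} (k : ℕ) {m : ℕ}
    (hA : ∀ x ∈ Ioo 0 r, ‖g (m + k) x‖ ≤ A) {x : ℝ} (hx : x ∈ Ioo 0 r) :
    ‖g m x‖ ≤ A * x ^ k / k ! := by
  induction k generalizing m x with
  | zero => simpa using hA x hx
  | succ k ih =>
    have hstep : ∀ y ∈ Ioo 0 r, ‖g (m + 1) y‖ ≤ A / k ! * y ^ k := fun y hy => by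
      rw [div_mul_eq_mul_div]
      exact ih (fun z hz => by rw [add_right_comm]; exact hA z hz) hy
    calc ‖g m x‖ ≤ A / k ! * x ^ (k + 1) / (k + 1) :=
          norm_le_of_tendsto_zero_of_norm_deriv_le (hg m) (h0 m) hstep hx
      _ = A * x ^ (k + 1) / (k + 1)! := by
          rw [Nat.factorial_succ]
          push_cast
          field_simp

end RealSegment

theorem sector_mono {γ γ' : ℝ} {r r' : ℝ≥0∞} (hγ : γ ≤ γ') (hr : r ≤ r') :
    Sector γ r ⊆ Sector γ' r' := fun _ ⟨h0, harg, hnorm⟩ =>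
  ⟨h0, harg.trans_le (by gcongr), hnorm.trans_le hr⟩

theorem AClass.mono {M : ℕ → ℝ} {γ γ' : ℝ} {r r' : ℝ≥0∞} {f : ℂ → ℂ} (hf : AClass M γ' r' f)
    (hS : Sector γ r ⊆ Sector γ' r') : AClass M γ r f := by
  obtain ⟨⟨hdiff, hbdd⟩, C, hC, σ, hσ, hbound⟩ := hf
  exact ⟨⟨hdiff.mono hS, fun j => (hbdd j).imp fun _ hB z hz => hB z (hS hz)⟩,
    C, hC, σ, hσ, fun j z hz => hbound j z (hS hz)⟩

theorem FlatOn.mono {γ γ' : ℝ} {r r' : ℝ≥0∞} {f : ℂ → ℂ} (hf : FlatOn γ' r' f)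
    (hS : Sector γ r ⊆ Sector γ' r') : FlatOn γ r f := fun j =>
  (hf j).mono_left (nhdsWithin_mono _ hS)

theorem norm_lt_two_mul_re_of_mem_sector {z : ℂ} (hz : z ∈ Sector (2 / 3) ⊤) :
    ‖z‖ < 2 * z.re := by
  obtain ⟨h0, harg, -⟩ := hz
  have hcos : 1 / 2 < Real.cos (arg z) := by
    rw [← Real.cos_abs, ← Real.cos_pi_div_three]
    exact Real.cos_lt_cos_of_nonneg_of_le_pi_div_two (abs_nonneg _) (by linarith [Real.pi_pos])
      (by linarith)
  rw [← norm_mul_cos_arg]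
  nlinarith [norm_pos_iff.2 h0]

theorem sector_mem_nhds_ofReal {γ x : ℝ} {r : ℝ≥0∞} (hγ : 0 < γ) (hx : 0 < x)
    (hxr : ENNReal.ofReal x < r) : Sector γ r ∈ 𝓝 (x : ℂ) := by
  have hslit : (x : ℂ) ∈ slitPlane := ofReal_mem_slitPlane.2 hx
  have harg : Tendsto (fun z => |arg z|) (𝓝 (x : ℂ)) (𝓝 0) := by
    simpa [ContinuousAt, arg_ofReal_of_nonneg hx.le] using (continuousAt_arg hslit).abs
  have hnorm : Tendsto (fun z : ℂ => (‖z‖₊ : ℝ≥0∞)) (𝓝 (x : ℂ)) (𝓝 (ENNReal.ofReal x)) := by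
    have := (ENNReal.continuous_coe.comp continuous_nnnorm).tendsto (x : ℂ)
    rwa [Function.comp_apply, ← enorm_eq_nnnorm, ← ofReal_norm, norm_real,
      Real.norm_of_nonneg hx.le] at this
  exact (eventually_ne_nhds (ofReal_ne_zero.2 hx.ne')).and
    ((harg.eventually_lt_const (by positivity)).and (hnorm.eventually_lt_const hxr))

theorem AClass.exists_norm_ofReal_le_of_flatOn {M : ℕ → ℝ} {γ : ℝ} {r : ℝ≥0∞} {f : ℂ → ℂ}
    (hA : AClass M γ r f) (hflat : FlatOn γ r f) (hγ : 0 < γ) :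
    ∃ C > (0 : ℝ), ∃ σ > (0 : ℝ), ∀ (j : ℕ) (x : ℝ), 0 < x → ENNReal.ofReal x < r →
      ‖f x‖ ≤ C * σ ^ j * M j * x ^ j := by
  obtain ⟨⟨hdiff, -⟩, C, hC, σ, hσ, hbound⟩ := hA
  refine ⟨C, hC, σ, hσ, fun j x hx hxr => ?_⟩
  obtain ⟨r', -, hxr', hr'r⟩ := ENNReal.lt_iff_exists_real_btwn.1 hxr
  have hxr' : x < r' := (ENNReal.ofReal_lt_ofReal_iff_of_nonneg hx.le).1 hxr'
  have hseg : ∀ y ∈ Ioo 0 r', Sector γ r ∈ 𝓝 (y : ℂ) := fun y hy =>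
    sector_mem_nhds_ofReal hγ hy.1
      (((ENNReal.ofReal_lt_ofReal_iff_of_nonneg hy.1.le).2 hy.2).trans hr'r)
  have hderiv : ∀ m, ∀ y ∈ Ioo 0 r', HasDerivAt (fun t : ℝ => iteratedDeriv m f t)
      (iteratedDeriv (m + 1) f y) y := fun m y hy => by
    have := ((hdiff.analyticAt (hseg y hy)).iterated_deriv m).differentiableAt.hasDerivAt
    rw [← iteratedDeriv_eq_iterate, ← iteratedDeriv_succ] at this
    exact this.comp_ofReal
  have hflatR : ∀ m, Tendsto (fun t : ℝ => iteratedDeriv m f t) (𝓝[>] 0) (𝓝 0) := fun m => by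
    refine (hflat m).comp (tendsto_nhdsWithin_iff.2 ⟨?_, ?_⟩)
    · simpa using (Complex.continuous_ofReal.tendsto 0).mono_left nhdsWithin_le_nhds
    · filter_upwards [Ioo_mem_nhdsGT (hx.trans hxr')] with y hy
      exact mem_of_mem_nhds (hseg y hy)
  have hbound' : ∀ y ∈ Ioo 0 r', ‖iteratedDeriv (0 + j) f y‖ ≤ C * σ ^ j * j.factorial * M j :=
    fun y hy => by simpa using hbound j y (mem_of_mem_nhds (hseg y hy))
  have := norm_le_pow_div_factorial_of_tendsto_zero hderiv hflatR j hbound' ⟨hx, hxr'⟩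
  rw [iteratedDeriv_zero] at this
  refine this.trans_eq ?_
  field_simp

theorem gfun_two_mul_sq (lam : ℝ) (z : ℂ) : Gfun (2 * lam) z ^ 2 = Gfun lam z := by
  rw [Gfun, Gfun, ← Complex.exp_nat_mul]
  push_cast
  ring_nf

theorem norm_gfun (lam : ℝ) (z : ℂ) :
    ‖Gfun lam z‖ = Real.exp ((arg z ^ 2 - Real.log ‖z‖ ^ 2) / lam) := by
  rw [Gfun, norm_exp, div_ofReal_re, neg_re, sq, mul_re, log_re, log_im]
  ring_nf

theorem differentiableOn_gfun (lam : ℝ) : DifferentiableOn ℂ (Gfun lam) slitPlane := fun _ hz =>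
  (((differentiableAt_log hz).pow 2).neg.div_const _).cexp.differentiableWithinAt

theorem mlam_pos (lam : ℝ) (j : ℕ) : 0 < Mlam lam j := Real.exp_pos _

theorem exp_neg_log_sq_div_le_pow_mul_mlam {lam x : ℝ} (hlam : 0 < lam) (hx : 0 < x) (j : ℕ) :
    Real.exp (-Real.log x ^ 2 / lam) ≤ x ^ j * Mlam lam j := by
  calc Real.exp (-Real.log x ^ 2 / lam)
      ≤ Real.exp (j * Real.log x + lam * j ^ 2 / 4) := by
        gcongr
        rw [div_le_iff₀ hlam]
        nlinarith [sq_nonneg (2 * Real.log x + lam * j)]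
    _ = x ^ j * Mlam lam j := by rw [Real.exp_add, Real.exp_nat_mul, Real.exp_log hx, Mlam]

theorem norm_gfun_le {lam : ℝ} (hlam : 0 < lam) {w : ℂ} (hw : 0 < w.re) (n : ℕ) :
    ‖Gfun lam w‖ ≤ Real.exp (Real.pi ^ 2 / (4 * lam)) * (‖w‖ ^ n * Mlam lam n) := by
  have harg : arg w ^ 2 / lam ≤ Real.pi ^ 2 / (4 * lam) := by
    have := abs_lt.1 (abs_arg_lt_pi_div_two_iff.2 (Or.inl hw))
    rw [← div_div]
    gcongr
    nlinarith
  calc ‖Gfun lam w‖ = Real.exp (arg w ^ 2 / lam) * Real.exp (-Real.log ‖w‖ ^ 2 / lam) := by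
        rw [norm_gfun, ← Real.exp_add]; ring_nf
    _ ≤ Real.exp (Real.pi ^ 2 / (4 * lam)) * (‖w‖ ^ n * Mlam lam n) :=
        mul_le_mul (Real.exp_le_exp.2 harg)
          (exp_neg_log_sq_div_le_pow_mul_mlam hlam (hw.trans_le (re_le_norm w)) n)
          (Real.exp_pos _).le (Real.exp_pos _).le

open Nat in
theorem norm_iteratedDeriv_gfun_le {lam : ℝ} (hlam : 0 < lam) {z : ℂ} (hz : ‖z‖ < 2 * z.re)
    (j n : ℕ) :
    ‖iteratedDeriv j (Gfun lam) z‖ ≤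
      j ! * (Real.exp (Real.pi ^ 2 / (4 * lam)) * ((3 * ‖z‖ / 2) ^ n * Mlam lam n)) /
        (‖z‖ / 2) ^ j := by
  have hz0 : 0 < ‖z‖ := by linarith [re_le_norm z]
  have hball : ∀ w ∈ Metric.closedBall z (‖z‖ / 2), 0 < w.re ∧ ‖w‖ ≤ 3 * ‖z‖ / 2 := by
    intro w hw
    rw [Metric.mem_closedBall, Complex.dist_eq] at hw
    have hre := (abs_le.1 ((abs_re_le_norm (w - z)).trans hw)).1
    have hnorm := norm_le_norm_add_norm_sub' w z
    rw [sub_re] at hre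
    constructor <;> linarith
  have hdiff : DifferentiableOn ℂ (Gfun lam) (Metric.closedBall z (‖z‖ / 2)) :=
    (differentiableOn_gfun lam).mono fun w hw => mem_slitPlane_iff.2 (Or.inl (hball w hw).1)
  refine norm_iteratedDeriv_le_of_forall_mem_sphere_norm_le j (by positivity)
    (hdiff.diffContOnCl_ball subset_rfl) fun w hw => ?_
  obtain ⟨hre, hnorm⟩ := hball w (Metric.sphere_subset_closedBall hw)
  refine (norm_gfun_le hlam hre n).trans ?_
  gcongr
  exact (mlam_pos lam n).le

open Nat in
theorem norm_iteratedDeriv_gfun_le_mlam {lam : ℝ} (hlam : 0 < lam) {z : ℂ}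
    (hz : ‖z‖ < 2 * z.re) (j : ℕ) :
    ‖iteratedDeriv j (Gfun lam) z‖ ≤
      Real.exp (Real.pi ^ 2 / (4 * lam)) * 3 ^ j * j ! * Mlam lam j := by
  have hz0 : 0 < ‖z‖ := by linarith [re_le_norm z]
  refine (norm_iteratedDeriv_gfun_le hlam hz j j).trans_eq ?_
  simp only [div_pow, mul_pow]
  field_simp

theorem aClass_gfun {lam : ℝ} (hlam : 0 < lam) : AClass (Mlam lam) (2 / 3) ⊤ (Gfun lam) := by
  have hsub : Sector (2 / 3) ⊤ ⊆ slitPlane := fun z hz =>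
    mem_slitPlane_iff.2 (Or.inl (by linarith [norm_nonneg z, norm_lt_two_mul_re_of_mem_sector hz]))
  have hbound := fun j z (hz : z ∈ Sector (2 / 3) ⊤) =>
    norm_iteratedDeriv_gfun_le_mlam hlam (norm_lt_two_mul_re_of_mem_sector hz) j
  exact ⟨⟨(differentiableOn_gfun lam).mono hsub, fun j => ⟨_, hbound j⟩⟩,
    _, Real.exp_pos _, 3, three_pos, hbound⟩

theorem flatOn_gfun {lam : ℝ} (hlam : 0 < lam) : FlatOn (2 / 3) ⊤ (Gfun lam) := by
  intro j
  set K := j.factorial * Real.exp (Real.pi ^ 2 / (4 * lam)) * (3 ^ (j + 1) * Mlam lam (j + 1)) / 2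
  refine squeeze_zero_norm' (a := fun z => K * ‖z‖) ?_ ?_
  · filter_upwards [self_mem_nhdsWithin] with z hz
    have hz := norm_lt_two_mul_re_of_mem_sector hz
    have hz0 : 0 < ‖z‖ := by linarith [re_le_norm z]
    refine (norm_iteratedDeriv_gfun_le hlam hz j (j + 1)).trans_eq ?_
    simp only [K, div_pow, mul_pow]
    field_simp
    ring
  · simpa using (tendsto_norm_zero.mono_left nhdsWithin_le_nhds).const_mul K

theorem exists_pow_mul_mlam_lt_exp_neg_log_sq_div {lam μ : ℝ} (hμ : 0 < μ) (hμlam : μ < lam)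
    (C : ℝ) {σ r : ℝ} (hσ : 0 < σ) (hr : 0 < r) :
    ∃ j : ℕ, ∃ x ∈ Ioo 0 r, C * σ ^ j * Mlam μ j * x ^ j < Real.exp (-Real.log x ^ 2 / lam) := by
  -- `x = exp (-lam j / 2)` maximizes `exp (-log x ^ 2 / lam) / x ^ j`
  set x : ℕ → ℝ := fun j => Real.exp (-(lam / 2 * j))
  set E : ℕ → ℝ := fun j => Real.exp (j * ((lam - μ) / 4 * j + -Real.log σ))
  have hE : Tendsto E atTop atTop := by
    refine Real.tendsto_exp_atTop.comp (tendsto_natCast_atTop_atTop.atTop_mul_atTop₀ ?_)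
    exact ((tendsto_natCast_atTop_atTop.const_mul_atTop (by linarith)).atTop_add
      tendsto_const_nhds)
  have hx : Tendsto x atTop (𝓝 0) := Real.tendsto_exp_atBot.comp
    (tendsto_neg_atTop_atBot.comp (tendsto_natCast_atTop_atTop.const_mul_atTop (by linarith)))
  obtain ⟨j, hCE, hxr⟩ := ((hE.eventually_gt_atTop C).and (hx.eventually (gt_mem_nhds hr))).exists
  have hprod : σ ^ j * Mlam μ j * x j ^ j * E j = Real.exp (-Real.log (x j) ^ 2 / lam) := by
    rw [← Real.exp_log hσ]
    simp only [x, E, Mlam, Real.log_exp, ← Real.exp_nat_mul, ← Real.exp_add]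
    congr 1
    field_simp
    ring
  have hP : 0 < σ ^ j * Mlam μ j * x j ^ j :=
    mul_pos (mul_pos (pow_pos hσ j) (mlam_pos μ j)) (pow_pos (Real.exp_pos _) j)
  refine ⟨j, x j, ⟨Real.exp_pos _, hxr⟩, ?_⟩
  calc C * σ ^ j * Mlam μ j * x j ^ j = σ ^ j * Mlam μ j * x j ^ j * C := by ring
    _ < σ ^ j * Mlam μ j * x j ^ j * E j := mul_lt_mul_of_pos_left hCE hP
    _ = _ := hprod

theorem not_aClass_mlam_gfun {lam μ γ : ℝ} {r : ℝ≥0∞} (hμ : 0 < μ) (hμlam : μ < lam)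
    (hγ : 0 < γ) (hr : 0 < r) (hflat : FlatOn γ r (Gfun lam)) :
    ¬ AClass (Mlam μ) γ r (Gfun lam) := by
  intro hA
  obtain ⟨C, -, σ, hσ, hbound⟩ := hA.exists_norm_ofReal_le_of_flatOn hflat hγ
  obtain ⟨r', -, hr'0, hr'r⟩ := ENNReal.lt_iff_exists_real_btwn.1 hr
  obtain ⟨j, x, hx, hlt⟩ :=
    exists_pow_mul_mlam_lt_exp_neg_log_sq_div hμ hμlam C hσ (ENNReal.ofReal_pos.1 hr'0)
  have hxr : ENNReal.ofReal x < r :=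
    ((ENNReal.ofReal_lt_ofReal_iff_of_nonneg hx.1.le).2 hx.2).trans hr'r
  have hle := hbound j x hx.1 hxr
  rw [norm_gfun, arg_ofReal_of_nonneg hx.1.le, norm_real, Real.norm_of_nonneg hx.1.le,
    zero_pow two_ne_zero, zero_sub] at hle
  linarith

/-- Counter-example in the ultraholomorphic case without moderate growth:
for small sectors, `G_λ` is a flat element of `A_{M^λ}(S_{γ,r})` not belonging
to `A_{M^μ}(S_{γ,r})` for any `μ < λ`; moreover `G_{2λ}² = G_λ`, so `G_{2λ}`
is a smooth root of `w² − G_λ(z)` escaping the class of the coefficients. -/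
theorem Gfun_counterexample (lam : ℝ) (hlam : 0 < lam) :
    (∀ z : ℂ, Gfun (2 * lam) z ^ 2 = Gfun lam z) ∧
    ∃ γ₀ > (0:ℝ), ∀ γ : ℝ, 0 < γ → γ ≤ γ₀ → ∀ r : ℝ≥0∞, 0 < r → r ≤ 1 →
      AClass (Mlam lam) γ r (Gfun lam) ∧
      FlatOn γ r (Gfun lam) ∧
      ∀ μ : ℝ, 0 < μ → μ < lam → ¬ AClass (Mlam μ) γ r (Gfun lam) := by
  refine ⟨gfun_two_mul_sq lam, 2 / 3, by norm_num, fun γ hγ hγ₀ r hr _ => ?_⟩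
  have hS : Sector γ r ⊆ Sector (2 / 3) ⊤ := sector_mono hγ₀ le_top
  have hflat : FlatOn γ r (Gfun lam) := (flatOn_gfun hlam).mono hS
  exact ⟨(aClass_gfun hlam).mono hS, hflat,
    fun μ hμ hμlam => not_aClass_mlam_gfun hμ hμlam hγ hr hflat⟩
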